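/- Let Q(x) = Σ_{k=1}^{n−1} a_k e^{2πikx} be a trigonometric polynomial with spectrum in [1, n−1], and set P = e^{2πinx} · Im Q(x). Then the n-th partial Fourier sum of P satisfies |S_n P(x)| = (1/2)|Q(x)| for every x. -/

import Mathlib

open Real Complex intervalIntegral

/-- The `m`-th Fourier coefficient of a 1-periodic function `f : ℝ → ℂ`. -/
noncomputable def fourierCoef (f : ℝ → ℂ) (m : ℤ) : ℂ :=
  ∫ t in (0:ℝ)..1, f t * Complex.exp (-2 * π * Complex.I * m * t)

/-- The `n`-th partial Fourier sum of a 1-periodic function `f : ℝ → ℂ`. -/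
noncomputable def partialFourierSum (n : ℕ) (f : ℝ → ℂ) (x : ℝ) : ℂ :=
  ∑ m ∈ Finset.Icc (-(n:ℤ)) (n:ℤ), fourierCoef f m * Complex.exp (2 * π * Complex.I * m * x)

open ComplexConjugate

/-!
Writing `Im Q = (Q - conj Q) / (2i)` turns `P` into a trigonometric polynomial: the terms of
`e^{2πinx} Q` have frequencies `n + k > n` and are removed by `S_n`, while those of
`e^{2πinx} conj Q` have frequencies `n - k ∈ [1, n - 1]` and are kept. Hence
`S_n P = -e^{2πinx} conj Q / (2i)`, whose modulus is `|Q| / 2`.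
-/

theorem integral_exp_two_pi_I_int_mul (m : ℤ) :
    ∫ t in (0:ℝ)..1, Complex.exp (2 * π * Complex.I * m * t) = if m = 0 then 1 else 0 := by
  split_ifs with hm
  · simp [hm]
  have hc : 2 * π * Complex.I * m ≠ 0 := by simp [Real.pi_ne_zero, Complex.I_ne_zero, hm]
  rw [integral_exp_mul_complex hc, ofReal_one, mul_one, ofReal_zero, mul_zero, Complex.exp_zero,
    show 2 * π * Complex.I * m = m * (2 * π * Complex.I) by ring, exp_int_mul_two_pi_mul_I,
    sub_self, zero_div]

theorem fourierCoef_finset_sum_exp {ι : Type*} (s : Finset ι) (c : ι → ℂ) (freq : ι → ℤ)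
    (m : ℤ) :
    fourierCoef (fun t => ∑ i ∈ s, c i * Complex.exp (2 * π * Complex.I * freq i * t)) m
      = ∑ i ∈ s, if freq i = m then c i else 0 := by
  have hmode : ∀ i (t : ℝ), c i * Complex.exp (2 * π * Complex.I * freq i * t)
      * Complex.exp (-2 * π * Complex.I * m * t)
      = c i * Complex.exp (2 * π * Complex.I * ((freq i - m : ℤ) : ℂ) * t) := by
    intro i t
    rw [mul_assoc, ← Complex.exp_add]
    push_cast
    ring_nf
  unfold fourierCoef
  simp_rw [Finset.sum_mul, hmode]
  rw [intervalIntegral.integral_finsetSum fun i _ =>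
    (by fun_prop : Continuous _).intervalIntegrable 0 1]
  refine Finset.sum_congr rfl fun i _ => ?_
  rw [intervalIntegral.integral_const_mul, integral_exp_two_pi_I_int_mul]
  simp [sub_eq_zero]

theorem partialFourierSum_finset_sum_exp {ι : Type*} (n : ℕ) (s : Finset ι) (c : ι → ℂ)
    (freq : ι → ℤ) (x : ℝ) :
    partialFourierSum n (fun t => ∑ i ∈ s, c i * Complex.exp (2 * π * Complex.I * freq i * t)) x
      = ∑ i ∈ s, if freq i ∈ Finset.Icc (-(n:ℤ)) n
          then c i * Complex.exp (2 * π * Complex.I * freq i * x) else 0 := by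
  unfold partialFourierSum
  simp_rw [fourierCoef_finset_sum_exp, Finset.sum_mul, ite_mul, zero_mul]
  rw [Finset.sum_comm]
  refine Finset.sum_congr rfl fun i _ => ?_
  rw [Finset.sum_ite_eq]

theorem conj_finset_sum_exp {ι : Type*} (s : Finset ι) (c : ι → ℂ) (freq : ι → ℤ) (x : ℝ) :
    conj (∑ i ∈ s, c i * Complex.exp (2 * π * Complex.I * freq i * x))
      = ∑ i ∈ s, conj (c i) * Complex.exp (2 * π * Complex.I * ((-freq i : ℤ) : ℂ) * x) := by
  simp only [map_sum, map_mul, ← Complex.exp_conj]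
  refine Finset.sum_congr rfl fun i _ => ?_
  simp [Complex.conj_ofReal, map_ofNat]

theorem exp_mul_finset_sum_exp {ι : Type*} (m : ℤ) (s : Finset ι) (c : ι → ℂ) (freq : ι → ℤ)
    (x : ℝ) :
    Complex.exp (2 * π * Complex.I * m * x)
        * ∑ i ∈ s, c i * Complex.exp (2 * π * Complex.I * freq i * x)
      = ∑ i ∈ s, c i * Complex.exp (2 * π * Complex.I * ((m + freq i : ℤ) : ℂ) * x) := by
  rw [Finset.mul_sum]
  refine Finset.sum_congr rfl fun i _ => ?_
  rw [mul_left_comm, ← Complex.exp_add]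
  push_cast
  ring_nf

theorem exp_mul_ofReal_im_finset_sum_exp {ι : Type*} (m : ℤ) (s : Finset ι) (a : ι → ℂ)
    (freq : ι → ℤ) (t : ℝ) :
    Complex.exp (2 * π * Complex.I * m * t)
        * ((∑ i ∈ s, a i * Complex.exp (2 * π * Complex.I * freq i * t)).im : ℂ)
      = ∑ j ∈ s.disjSum s,
          Sum.elim (fun i => a i / (2 * Complex.I)) (fun i => -conj (a i) / (2 * Complex.I)) j
            * Complex.exp (2 * π * Complex.I * Sum.elim (m + freq ·) (m - freq ·) j * t) := by
  rw [Complex.im_eq_sub_conj, conj_finset_sum_exp, mul_div_assoc', mul_sub,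
    exp_mul_finset_sum_exp, exp_mul_finset_sum_exp, sub_div, Finset.sum_div, Finset.sum_div,
    sub_eq_add_neg, ← Finset.sum_neg_distrib, Finset.sum_disjSum]
  congr 1 <;> refine Finset.sum_congr rfl fun i _ => ?_ <;>
    simp only [Sum.elim_inl, Sum.elim_inr, ← sub_eq_add_neg] <;> ring

theorem partialFourierSum_exp_mul_ofReal_im (n : ℕ) (a : ℕ → ℂ) (x : ℝ) :
    partialFourierSum n (fun t => Complex.exp (2 * π * Complex.I * n * t)
        * ((∑ k ∈ Finset.Icc 1 (n - 1), a k * Complex.exp (2 * π * Complex.I * k * t)).im : ℂ)) x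
      = -(Complex.exp (2 * π * Complex.I * n * x)
          * conj (∑ k ∈ Finset.Icc 1 (n - 1), a k * Complex.exp (2 * π * Complex.I * k * x)))
          / (2 * Complex.I) := by
  simp only [← Int.cast_natCast (R := ℂ), exp_mul_ofReal_im_finset_sum_exp]
  rw [partialFourierSum_finset_sum_exp, Finset.sum_disjSum,
    Finset.sum_eq_zero fun k hk =>
      if_neg (by simp only [Finset.mem_Icc, Sum.elim_inl] at hk ⊢; omega),
    zero_add, Finset.sum_congr rfl fun k hk =>
      if_pos (by simp only [Finset.mem_Icc, Sum.elim_inr] at hk ⊢; omega),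
    conj_finset_sum_exp, exp_mul_finset_sum_exp, neg_div, Finset.sum_div,
    ← Finset.sum_neg_distrib]
  refine Finset.sum_congr rfl fun k _ => ?_
  simp only [Sum.elim_inr, ← sub_eq_add_neg]
  ring

theorem abs_partialFourierSum_modulated_im_general (n : ℕ) (a : ℕ → ℂ)
    (Q P : ℝ → ℂ)
    (hQ : ∀ x : ℝ, Q x = ∑ k ∈ Finset.Icc 1 (n - 1), a k * Complex.exp (2 * π * Complex.I * k * x))
    (hP : ∀ x : ℝ, P x = Complex.exp (2 * π * Complex.I * n * x) * ((Q x).im : ℂ)) (x : ℝ) :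
    ‖partialFourierSum n P x‖ = (1/2) * ‖Q x‖ := by
  have hP' : P = fun t : ℝ => Complex.exp (2 * π * Complex.I * n * t)
      * ((∑ k ∈ Finset.Icc 1 (n - 1), a k * Complex.exp (2 * π * Complex.I * k * t)).im : ℂ) := by
    funext t
    rw [hP, hQ]
  have hunit : ‖Complex.exp (2 * π * Complex.I * n * x)‖ = 1 := by
    simp [Complex.norm_exp]
  rw [hP', partialFourierSum_exp_mul_ofReal_im, ← hQ, norm_div, norm_neg, norm_mul,
    Complex.norm_conj, hunit, norm_mul, Complex.norm_ofNat, norm_I]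
  ring

/-- For a trigonometric polynomial `Q(x) = Σ_{k=1}^{n-1} a_k e^{2πikx}` with spectrum in
`[1, n-1]` and `P(x) = e^{2πinx} · Im Q(x)`, one has `|S_n P(x)| = (1/2)|Q(x)|` for all `x`. -/
theorem abs_partialFourierSum_modulated_im (n : ℕ) (hn : 1 ≤ n) (a : ℕ → ℂ)
    (Q P : ℝ → ℂ)
    (hQ : ∀ x : ℝ, Q x = ∑ k ∈ Finset.Icc 1 (n - 1), a k * Complex.exp (2 * π * Complex.I * k * x))
    (hP : ∀ x : ℝ, P x = Complex.exp (2 * π * Complex.I * n * x) * ((Q x).im : ℂ)) (x : ℝ) :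
    ‖partialFourierSum n P x‖ = (1/2) * ‖Q x‖ :=
  abs_partialFourierSum_modulated_im_general n a Q P hQ hP x
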